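/- Let m ≥ 1 and a_0, a_1, …, a_m ∈ L with a_m ≠ 0. For n ≥ m define Φ_n = a_0 + Σ_{j=1}^{m} a_j [n−j+1]^{q^{j−1}}[n−j+2]^{q^{j−2}}⋯[n]. If u = Σ_{n≥0} u_n t^{q^n}/D_n is a formal solution of the model equation Σ_{j=0}^{m} a_j τ^j (d^j u) = f, where f = Σ_{n≥0} φ_n t^{q^n}/D_n, then u_n Φ_n = φ_n for every n ≥ m; moreover, if limsup_{n→∞} |φ_n|^{q^{-n}} < ∞ then limsup_{n→∞} |u_n|^{q^{-n}} < ∞, i.e. every formal solution of the model equation has a positive radius of convergence whenever f does. -/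

import Mathlib

/- Context: `q = p^υ`, `L` is an algebraically closed field of characteristic `p`,
complete w.r.t. the nontrivial nonarchimedean absolute value `abv`, `x ∈ L` with
`|x| = q⁻¹`, `[n] = x^{q^n} - x`, and `D_0 = 1`, `D_i = [i]·D_{i-1}^q` are the
Carlitz factorials. -/

/-- The Carlitz bracket `[n] = x^{q^n} - x`. -/
def carlitzBr (q : ℕ) {L : Type*} [CommRing L] (x : L) (n : ℕ) : L :=
  x ^ q ^ n - x

/-- A formal series `Σ_{n≥0} c_n t^{q^n}/D_n` has a positive radius of convergence
iff `limsup_{n→∞} |c_n|^{q^{-n}} < ∞`. -/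
def HasPosRadius (q : ℕ) {L : Type*} [Field L] (abv : AbsoluteValue L ℝ)
    (c : ℕ → L) : Prop :=
  Filter.limsup (fun n => ENNReal.ofReal (abv (c n)) ^ (((q : ℝ) ^ n)⁻¹))
    Filter.atTop < ⊤

/-- Coefficientwise action of the Carlitz derivative `d` on formal series
`Σ c_n t^{q^n}/D_n`: the `n`-th coefficient of `du` is `(c_{n+1})^{1/q}`, where
`rt` is the `q`-th root map of `L`. -/
def dCoeff {L : Type*} (rt : L → L) (c : ℕ → L) : ℕ → L :=
  fun n => rt (c (n + 1))

/-- Coefficientwise action of the Frobenius `τ` on formal series: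
`τ(Σ c_n t^{q^n}/D_n) = Σ c_n^q [n+1] t^{q^{n+1}}/D_{n+1}`. -/
def tauCoeff (q : ℕ) {L : Type*} [CommRing L] (x : L) (c : ℕ → L) : ℕ → L
  | 0 => 0
  | n + 1 => c n ^ q * carlitzBr q x (n + 1)

/-- Coefficientwise action of an operator power series `A(τ) = Σ_k α_k τ^k` on a
formal series: the `l`-th coefficient of `A(τ)u` is
`Σ_{n+k=l} α_k c_n^{q^k} [n+1]^{q^{k-1}} ⋯ [n+k]` (bracket product empty for `k = 0`). -/
def opSeriesCoeff (q : ℕ) {L : Type*} [CommRing L] (x : L) (α : ℕ → L)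
    (c : ℕ → L) : ℕ → L :=
  fun l => ∑ nk ∈ Finset.HasAntidiagonal.antidiagonal l,
    α nk.2 * c nk.1 ^ q ^ nk.2 *
      ∏ s ∈ Finset.Icc 1 nk.2, carlitzBr q x (nk.1 + s) ^ q ^ (nk.2 - s)

/-! For `n ≥ m` the `j`-th term of the model equation at index `n` is `a_j u_n` times a product
of brackets, so the equation reads `u_n Φ_n = φ_n`. In characteristic `p` that product is
`∏_{i<j} (x^{q^n} - x^{q^i})`, hence `Φ_n = G(x^{q^n})` for one polynomial `G` whose coefficient
of degree `m` is `a_m ≠ 0`. Writing `G = X^k H` with `H(0) ≠ 0` and using `x^{q^n} → 0`, we get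
`|Φ_n| ≥ c |x|^{k q^n}` for large `n`, so `|u_n| ≤ c⁻¹ q^{k q^n} |φ_n|`; taking `q^n`-th roots
costs only the constant factor `q^k`. -/

open Finset Filter Topology Polynomial

section CoefficientOperators

variable {L : Type*}

theorem dCoeff_iterate_apply (rt : L → L) (u : ℕ → L) (j n : ℕ) :
    (dCoeff rt)^[j] u n = rt^[j] (u (n + j)) := by
  induction j generalizing u n with
  | zero => rfl
  | succ j ih =>
    rw [Function.iterate_succ_apply, ih, Function.iterate_succ_apply]
    rfl

theorem pow_pow_iterate_of_pow_eq [Monoid L] {q : ℕ} {rt : L → L}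
    (hrt : ∀ e : L, rt e ^ q = e) (j : ℕ) (y : L) : (rt^[j] y) ^ q ^ j = y := by
  induction j generalizing y with
  | zero => simp
  | succ j ih => rw [Function.iterate_succ_apply', pow_succ', pow_mul, hrt, ih]

theorem tauCoeff_iterate_apply_add [CommRing L] (q : ℕ) (x : L) (c : ℕ → L) (n j : ℕ) :
    (tauCoeff q x)^[j] c (n + j) =
      c n ^ q ^ j * ∏ s ∈ Icc 1 j, carlitzBr q x (n + s) ^ q ^ (j - s) := by
  induction j with
  | zero => simp
  | succ j ih =>
    rw [Function.iterate_succ_apply', ← add_assoc]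
    change ((tauCoeff q x)^[j] c (n + j)) ^ q * carlitzBr q x (n + j + 1) = _
    have hpow : ∀ s ∈ Icc 1 j, (carlitzBr q x (n + s) ^ q ^ (j - s)) ^ q =
        carlitzBr q x (n + s) ^ q ^ (j + 1 - s) := fun s hs => by
      rw [← pow_mul, ← pow_succ, Nat.sub_add_comm (mem_Icc.mp hs).2]
    rw [ih, prod_Icc_succ_top (by omega : 1 ≤ j + 1), mul_pow, ← prod_pow, prod_congr rfl hpow,
      ← pow_mul, ← pow_succ, Nat.sub_self, pow_zero, pow_one, add_assoc, mul_assoc]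

theorem tauCoeff_iterate_dCoeff_iterate_apply_add [CommRing L] {q : ℕ} (x : L) {rt : L → L}
    (hrt : ∀ e : L, rt e ^ q = e) (u : ℕ → L) (n j : ℕ) :
    (tauCoeff q x)^[j] ((dCoeff rt)^[j] u) (n + j) =
      u (n + j) * ∏ s ∈ Icc 1 j, carlitzBr q x (n + s) ^ q ^ (j - s) := by
  rw [tauCoeff_iterate_apply_add, dCoeff_iterate_apply, pow_pow_iterate_of_pow_eq hrt]

/-- `Φ_n`, with `a_0` written as the `j = 0` term (an empty bracket product). -/
def modelSymbol [CommRing L] (q : ℕ) (x : L) (a : ℕ → L) (m n : ℕ) : L :=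
  ∑ j ∈ range (m + 1), a j * ∏ s ∈ Icc 1 j, carlitzBr q x (n - j + s) ^ q ^ (j - s)

theorem modelSymbol_eq_add_sum_Icc [CommRing L] (q : ℕ) (x : L) (a : ℕ → L) (m n : ℕ) :
    modelSymbol q x a m n =
      a 0 + ∑ j ∈ Icc 1 m, a j * ∏ s ∈ Icc 1 j, carlitzBr q x (n - j + s) ^ q ^ (j - s) := by
  rw [modelSymbol, sum_range_eq_add_Ico _ (by omega : 0 < m + 1), Ico_add_one_right_eq_Icc]
  simp

theorem sum_tauCoeff_iterate_dCoeff_iterate_eq_mul [CommRing L] {q : ℕ} (x : L)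
    {rt : L → L} (hrt : ∀ e : L, rt e ^ q = e) (a u : ℕ → L) {m n : ℕ} (hn : m ≤ n) :
    ∑ j ∈ range (m + 1), a j * ((tauCoeff q x)^[j] ((dCoeff rt)^[j] u)) n =
      u n * modelSymbol q x a m n := by
  rw [modelSymbol, mul_sum]
  refine sum_congr rfl fun j hj => ?_
  obtain ⟨k, rfl⟩ : ∃ k, n = k + j := ⟨n - j, by rw [mem_range] at hj; omega⟩
  rw [tauCoeff_iterate_dCoeff_iterate_apply_add x hrt, Nat.add_sub_cancel]
  ring

end CoefficientOperators

section ModelPolynomial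

variable {L : Type*} [CommRing L]

theorem carlitzBr_pow_pow {p υ q : ℕ} [Fact p.Prime] [CharP L p] (hq : q = p ^ υ) (x : L)
    (i j : ℕ) : carlitzBr q x i ^ q ^ j = x ^ q ^ (i + j) - x ^ q ^ j := by
  have hqj : q ^ j = p ^ (υ * j) := by rw [hq, pow_mul]
  rw [carlitzBr, hqj, sub_pow_char_pow, ← hqj, ← pow_mul, ← pow_add]

theorem prod_carlitzBr_pow_eq_prod_sub {p υ q : ℕ} [Fact p.Prime] [CharP L p]
    (hq : q = p ^ υ) (x : L) {j n : ℕ} (hjn : j ≤ n) :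
    ∏ s ∈ Icc 1 j, carlitzBr q x (n - j + s) ^ q ^ (j - s) =
      ∏ i ∈ range j, (x ^ q ^ n - x ^ q ^ i) := by
  refine prod_nbij' (fun s => j - s) (fun i => j - i) ?_ ?_ ?_ ?_ ?_ <;>
    simp only [mem_Icc, mem_range]
  · omega
  · omega
  · intro s hs; omega
  · intro i hi; omega
  · intro s hs
    rw [carlitzBr_pow_pow hq, show n - j + s + (j - s) = n by omega]

noncomputable def modelPoly (q : ℕ) (x : L) (a : ℕ → L) (m : ℕ) : L[X] :=
  ∑ j ∈ range (m + 1), C (a j) * ∏ i ∈ range j, (X - C (x ^ q ^ i))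

theorem modelSymbol_eq_eval_modelPoly {p υ q : ℕ} [Fact p.Prime] [CharP L p]
    (hq : q = p ^ υ) (x : L) (a : ℕ → L) {m n : ℕ} (hn : m ≤ n) :
    modelSymbol q x a m n = (modelPoly q x a m).eval (x ^ q ^ n) := by
  simp only [modelSymbol, modelPoly, eval_finsetSum, eval_mul, eval_C, eval_prod, eval_sub,
    eval_X]
  refine sum_congr rfl fun j hj => ?_
  rw [prod_carlitzBr_pow_eq_prod_sub hq x (by rw [mem_range] at hj; omega)]

theorem coeff_sum_C_mul_prod_X_sub_C [Nontrivial L] (a r : ℕ → L) (m : ℕ) :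
    (∑ j ∈ range (m + 1), C (a j) * ∏ i ∈ range j, (X - C (r i))).coeff m = a m := by
  have hmonic : ∀ j, (∏ i ∈ range j, (X - C (r i))).Monic := fun j =>
    monic_prod_of_monic _ _ fun i _ => monic_X_sub_C (r i)
  have hdeg : ∀ j, (∏ i ∈ range j, (X - C (r i))).natDegree = j := fun j => by
    rw [natDegree_prod_of_monic _ _ fun i _ => monic_X_sub_C (r i)]
    simp
  have hlead : (∏ i ∈ range m, (X - C (r i))).coeff m = 1 := by
    simpa only [hdeg m] using (hmonic m).coeff_natDegree
  rw [finsetSum_coeff, sum_range_succ, coeff_C_mul, hlead, mul_one, add_eq_right]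
  refine sum_eq_zero fun j hj => ?_
  rw [coeff_C_mul, coeff_eq_zero_of_natDegree_lt (by rw [hdeg j]; exact mem_range.mp hj),
    mul_zero]

theorem modelPoly_ne_zero [Nontrivial L] (q : ℕ) (x : L) {a : ℕ → L} {m : ℕ} (ham : a m ≠ 0) :
    modelPoly q x a m ≠ 0 := fun h =>
  ham (by rw [← coeff_sum_C_mul_prod_X_sub_C a (fun i => x ^ q ^ i) m, ← modelPoly, h,
    coeff_zero])

end ModelPolynomial

section AbsoluteValue

variable {L : Type*} [CommRing L] [Nontrivial L] (abv : AbsoluteValue L ℝ)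

theorem Polynomial.abv_eval_le_sum_abv_coeff (Q : L[X]) {z : L} (hz : abv z ≤ 1) :
    abv (Q.eval z) ≤ ∑ i ∈ range (Q.natDegree + 1), abv (Q.coeff i) := by
  rw [eval_eq_sum_range]
  refine (abv.sum_le _ _).trans (sum_le_sum fun i _ => ?_)
  rw [abv.map_mul, abv.map_pow]
  exact mul_le_of_le_one_right (abv.nonneg _) (pow_le_one₀ (abv.nonneg z) hz)

theorem Polynomial.tendsto_abv_eval_sub_eval_zero (H : L[X]) {ι : Type*} {l : Filter ι}
    {y : ι → L} (hy : Tendsto (fun i => abv (y i)) l (𝓝 0)) :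
    Tendsto (fun i => abv (H.eval (y i) - H.eval 0)) l (𝓝 0) := by
  obtain ⟨Q, hQ⟩ := X_dvd_sub_C (p := H)
  set B := ∑ i ∈ range (Q.natDegree + 1), abv (Q.coeff i)
  have hbound : ∀ z, abv z ≤ 1 → abv (H.eval z - H.eval 0) ≤ B * abv z := fun z hz => by
    have hfactor : H.eval z - H.eval 0 = z * Q.eval z := by
      simpa [coeff_zero_eq_eval_zero] using congrArg (eval z) hQ
    rw [hfactor, abv.map_mul, mul_comm]
    exact mul_le_mul_of_nonneg_right (Q.abv_eval_le_sum_abv_coeff abv hz) (abv.nonneg z)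
  have hB : Tendsto (fun i => B * abv (y i)) l (𝓝 0) := by simpa using hy.const_mul B
  exact squeeze_zero' (Eventually.of_forall fun i => abv.nonneg _)
    ((hy.eventually (Iic_mem_nhds zero_lt_one)).mono fun i hi => hbound _ hi) hB

theorem Polynomial.exists_eventually_mul_abv_pow_le_abv_eval {G : L[X]} (hG : G ≠ 0)
    {ι : Type*} {l : Filter ι} {y : ι → L} (hy : Tendsto (fun i => abv (y i)) l (𝓝 0)) :
    ∃ k : ℕ, ∃ c > 0, ∀ᶠ i in l, c * abv (y i) ^ k ≤ abv (G.eval (y i)) := by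
  obtain ⟨H, hGH, hH⟩ := G.exists_eq_pow_rootMultiplicity_mul_and_not_dvd hG 0
  rw [C_0, sub_zero, X_dvd_iff, coeff_zero_eq_eval_zero] at hH
  have hH0 : 0 < abv (H.eval 0) := abv.pos hH
  have hlim : Tendsto (fun i => abv (H.eval (y i))) l (𝓝 (abv (H.eval 0))) := by
    rw [tendsto_iff_norm_sub_tendsto_zero]
    exact squeeze_zero (fun i => norm_nonneg _)
      (fun i => abv.abs_abv_sub_le_abv_sub _ _) (H.tendsto_abv_eval_sub_eval_zero abv hy)
  refine ⟨rootMultiplicity 0 G, abv (H.eval 0) / 2, half_pos hH0, ?_⟩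
  filter_upwards [hlim.eventually_const_lt (half_lt_self hH0)] with i hi
  conv_rhs => rw [hGH, C_0, sub_zero, eval_mul, eval_pow, eval_X, abv.map_mul, abv.map_pow]
  rw [mul_comm]
  exact mul_le_mul_of_nonneg_left hi.le (pow_nonneg (abv.nonneg _) _)

end AbsoluteValue

theorem Real.rpow_inv_natCast_le_of_mul_pow_le {N : ℕ} (hN : N ≠ 0) {c r a b : ℝ}
    (hc : 0 < c) (hr : 0 < r) (ha : 0 ≤ a) (h : c * r ^ N * a ≤ b) :
    a ^ (N⁻¹ : ℝ) ≤ max 1 c⁻¹ * r⁻¹ * b ^ (N⁻¹ : ℝ) := by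
  have he0 : (0 : ℝ) ≤ (N : ℝ)⁻¹ := by positivity
  have he1 : (N⁻¹ : ℝ) ≤ 1 := Nat.cast_inv_le_one N
  have hb : 0 ≤ b := le_trans (by positivity) h
  have hab : a ≤ c⁻¹ * r⁻¹ ^ N * b := by
    rw [inv_pow, ← mul_inv, mul_comm, ← div_eq_mul_inv, le_div_iff₀ (by positivity), mul_comm]
    exact h
  have hc' : c⁻¹ ^ (N⁻¹ : ℝ) ≤ max 1 c⁻¹ := by
    rcases le_total c⁻¹ 1 with h1 | h1
    · exact (Real.rpow_le_one (inv_nonneg.2 hc.le) h1 he0).trans (le_max_left _ _)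
    · exact (Real.rpow_le_rpow_of_exponent_le h1 he1).trans
        (by rw [Real.rpow_one]; exact le_max_right _ _)
  calc a ^ (N⁻¹ : ℝ) ≤ (c⁻¹ * r⁻¹ ^ N * b) ^ (N⁻¹ : ℝ) := Real.rpow_le_rpow ha hab he0
    _ = c⁻¹ ^ (N⁻¹ : ℝ) * r⁻¹ * b ^ (N⁻¹ : ℝ) := by
      rw [Real.mul_rpow (by positivity) hb, Real.mul_rpow (by positivity) (by positivity),
        Real.pow_rpow_inv_natCast (by positivity) hN]
    _ ≤ max 1 c⁻¹ * r⁻¹ * b ^ (N⁻¹ : ℝ) := by gcongr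

theorem HasPosRadius.of_eventually_mul_pow_le {L : Type*} [Field L] {q : ℕ} (hq : q ≠ 0)
    {abv : AbsoluteValue L ℝ} {u φ : ℕ → L} {c r : ℝ} (hc : 0 < c) (hr : 0 < r)
    (h : ∀ᶠ n in atTop, c * r ^ q ^ n * abv (u n) ≤ abv (φ n))
    (hφ : HasPosRadius q abv φ) : HasPosRadius q abv u := by
  set K : ENNReal := ENNReal.ofReal (max 1 c⁻¹ * r⁻¹)
  have hK : K ≠ ⊤ := ENNReal.ofReal_ne_top
  refine lt_of_le_of_lt (le_trans (limsup_le_limsup (h.mono fun n hn => ?_))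
    (ENNReal.limsup_const_mul_of_ne_top hK).le) (ENNReal.mul_lt_top hK.lt_top hφ)
  have hN : q ^ n ≠ 0 := pow_ne_zero n hq
  have key := Real.rpow_inv_natCast_le_of_mul_pow_le hN hc hr (abv.nonneg (u n)) hn
  push_cast at key
  dsimp only
  rw [ENNReal.ofReal_rpow_of_nonneg (abv.nonneg _) (by positivity),
    ENNReal.ofReal_rpow_of_nonneg (abv.nonneg _) (by positivity), ← ENNReal.ofReal_mul
    (by positivity)]
  exact ENNReal.ofReal_le_ofReal key

theorem model_equation_solution_general
    (p υ q : ℕ) [Fact p.Prime] (hυ : 1 ≤ υ) (hq : q = p ^ υ)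
    (L : Type*) [Field L] [CharP L p]
    (abv : AbsoluteValue L ℝ)
    (x : L) (hx : abv x = (q : ℝ)⁻¹)
    (rt : L → L) (hrt : ∀ e : L, rt e ^ q = e)
    (m : ℕ) (a : ℕ → L) (ham : a m ≠ 0)
    (Φ : ℕ → L)
    (hΦ : ∀ n : ℕ, Φ n = a 0 + ∑ j ∈ Finset.Icc 1 m, a j *
        ∏ s ∈ Finset.Icc 1 j, carlitzBr q x (n - j + s) ^ q ^ (j - s))
    (φ : ℕ → L) (u : ℕ → L)
    (heq : ∀ l : ℕ,
      ∑ j ∈ Finset.range (m + 1),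
        a j * ((tauCoeff q x)^[j] ((dCoeff rt)^[j] u)) l = φ l) :
    (∀ n : ℕ, m ≤ n → u n * Φ n = φ n) ∧
      (HasPosRadius q abv φ → HasPosRadius q abv u) := by
  have hΦ' : ∀ n, Φ n = modelSymbol q x a m n := fun n => by
    rw [hΦ, modelSymbol_eq_add_sum_Icc]
  have hsol : ∀ n, m ≤ n → u n * Φ n = φ n := fun n hn => by
    rw [hΦ', ← heq n, sum_tauCoeff_iterate_dCoeff_iterate_eq_mul x hrt a u hn]
  refine ⟨hsol, fun hφ => ?_⟩
  have hq1 : 1 < q := hq ▸ Nat.one_lt_pow (by omega) (Fact.out : p.Prime).one_lt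
  have hx0 : 0 < abv x := by rw [hx]; positivity
  have hx1 : abv x < 1 := by rw [hx]; exact inv_lt_one_of_one_lt₀ (by exact_mod_cast hq1)
  have hy : Tendsto (fun n => abv (x ^ q ^ n)) atTop (𝓝 0) := by
    simp_rw [abv.map_pow]
    exact (tendsto_pow_atTop_nhds_zero_of_lt_one hx0.le hx1).comp
      (tendsto_pow_atTop_atTop_of_one_lt hq1)
  obtain ⟨k, c, hc, hbound⟩ := (modelPoly q x a m).exists_eventually_mul_abv_pow_le_abv_eval abv
    (modelPoly_ne_zero q x ham) hy
  refine hφ.of_eventually_mul_pow_le (by omega) hc (pow_pos hx0 k) ?_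
  filter_upwards [hbound, eventually_ge_atTop m] with n hn hmn
  calc c * (abv x ^ k) ^ q ^ n * abv (u n) ≤ abv (Φ n) * abv (u n) := by
        rw [hΦ', modelSymbol_eq_eval_modelPoly hq x a hmn, ← pow_mul, mul_comm k, pow_mul,
          ← abv.map_pow]
        gcongr
    _ = abv (φ n) := by rw [← abv.map_mul, mul_comm, hsol n hmn]

/-- for the model equation `Σ_{j=0}^m a_j τ^j (d^j u) = f` with
`a_m ≠ 0` one has `u_n Φ_n = φ_n` for `n ≥ m`, where
`Φ_n = a_0 + Σ_{j=1}^m a_j [n-j+1]^{q^{j-1}} ⋯ [n]`; moreover if `f` has a positive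
radius of convergence then so does every formal solution `u`. -/
theorem model_equation_solution
    (p υ q : ℕ) [Fact p.Prime] (hυ : 1 ≤ υ) (hq : q = p ^ υ)
    (L : Type*) [Field L] [IsAlgClosed L] [CharP L p]
    (abv : AbsoluteValue L ℝ) (hna : IsNonarchimedean (abv : L → ℝ))
    (x : L) (hx : abv x = (q : ℝ)⁻¹)
    (rt : L → L) (hrt : ∀ e : L, rt e ^ q = e)
    (m : ℕ) (hm : 1 ≤ m) (a : ℕ → L) (ham : a m ≠ 0)
    (Φ : ℕ → L)
    (hΦ : ∀ n : ℕ, Φ n = a 0 + ∑ j ∈ Finset.Icc 1 m, a j *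
        ∏ s ∈ Finset.Icc 1 j, carlitzBr q x (n - j + s) ^ q ^ (j - s))
    (φ : ℕ → L) (u : ℕ → L)
    (heq : ∀ l : ℕ,
      ∑ j ∈ Finset.range (m + 1),
        a j * ((tauCoeff q x)^[j] ((dCoeff rt)^[j] u)) l = φ l) :
    (∀ n : ℕ, m ≤ n → u n * Φ n = φ n) ∧
      (HasPosRadius q abv φ → HasPosRadius q abv u) :=
  model_equation_solution_general p υ q hυ hq L abv x hx rt hrt m a ham Φ hΦ φ u heq
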